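/- Let G : [a,b] → ℝ be positive and monotonic and F : [a,b] → ℝ be twice continuously differentiable with F''(t) ≥ r > 0 (or F''(t) ≤ −r < 0) throughout [a,b]. Then |∫_a^b G(t) e^{iF(t)} dt| ≤ C (max_{[a,b]} G) / √r for an absolute constant C. -/

import Mathlib

/-!
With `M = sup G`, write `G t = ∫₀^M 1{s < G t} ds` (layer cake). By Fubini the weighted integral
becomes an integral over `s ∈ (0, M]` of unweighted integrals of `e^{iF}` over the superlevel sets
`{G > s}`, which are intervals because `G` is monotone. So it suffices to bound `∫_u^v e^{iF}` by
`8 / √r` uniformly over subintervals. With `m = √r`, split `[u, v]` where `F'` crosses `∓m`. On the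
outer pieces `|F'| ≥ m`, and integrating by parts against `1 / (iF')` gives `3 / m`: since `F'` is
monotone, the total variation of `1 / F'` telescopes. On the middle piece `|F'| < m`, and `F'' ≥ r`
makes it at most `2m / r = 2 / m` long. The case `F'' ≤ -r` follows by complex conjugation.
-/

open Set Complex MeasureTheory

section LayerCake

variable {α E : Type*} [MeasurableSpace α] [NormedAddCommGroup E] [NormedSpace ℝ E]

theorem integral_smul_eq_integral_setIntegral_lt [CompleteSpace E] {μ : Measure α} [SFinite μ]
    {G : α → ℝ} {f : α → E} {M : ℝ} (hG : Measurable G) (hG0 : ∀ t, 0 ≤ G t) (hGM : ∀ t, G t ≤ M)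
    (hf : Integrable f μ) :
    ∫ t, G t • f t ∂μ = ∫ s in Ioc (0 : ℝ) M, ∫ t in {t | s < G t}, f t ∂μ := by
  set H : ℝ × α → E := {p | p.1 < G p.2}.indicator fun p => f p.2
  have hH : Integrable H ((volume.restrict (Ioc 0 M)).prod μ) := by
    refine (hf.norm.comp_snd _).mono' ?_ (.of_forall fun p => norm_indicator_le_norm_self _ _)
    exact (hf.aestronglyMeasurable.comp_snd).indicator
      (measurableSet_lt measurable_fst (hG.comp measurable_snd))
  have hslice (t : α) : G t • f t = ∫ s in Ioc (0 : ℝ) M, H (s, t) := by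
    change _ = ∫ s in Ioc (0 : ℝ) M, (Iio (G t)).indicator (fun _ => f t) s
    have hlevel : Iio (G t) ∩ Ioc 0 M = Ioo 0 (G t) := by
      ext s
      simp only [mem_inter_iff, mem_Iio, mem_Ioc, mem_Ioo]
      exact ⟨fun h => ⟨h.2.1, h.1⟩, fun h => ⟨h.2, h.1, h.2.le.trans (hGM t)⟩⟩
    rw [integral_indicator_const (f t) measurableSet_Iio,
      measureReal_restrict_apply measurableSet_Iio, hlevel,
      Real.volume_real_Ioo_of_le (hG0 t), sub_zero]
  calc ∫ t, G t • f t ∂μ = ∫ t, (∫ s in Ioc (0 : ℝ) M, H (s, t)) ∂μ :=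
        integral_congr_ae (.of_forall hslice)
    _ = ∫ s in Ioc (0 : ℝ) M, ∫ t, H (s, t) ∂μ := integral_integral_swap hH.swap
    _ = ∫ s in Ioc (0 : ℝ) M, ∫ t in {t | s < G t}, f t ∂μ := by
      congr 1 with s
      exact integral_indicator (measurableSet_lt measurable_const hG)

theorem Set.OrdConnected.ae_eq_Ioc_csInf_csSup {X : Set ℝ} (hX : X.OrdConnected)
    (hb : BddBelow X) (ha : BddAbove X) : X =ᵐ[volume] Ioc (sInf X) (sSup X) := by
  rcases X.eq_empty_or_nonempty with rfl | hne
  · simp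
  have hIoo : Ioo (sInf X) (sSup X) ⊆ X :=
    IsConnected.Ioo_csInf_csSup_subset ⟨hne, hX.isPreconnected⟩ hb ha
  refine ((subset_Icc_csInf_csSup hb ha).eventuallyLE.trans Ioc_ae_eq_Icc.symm.le).antisymm ?_
  exact Ioo_ae_eq_Ioc.symm.le.trans hIoo.eventuallyLE

variable {a b K : ℝ} {f : ℝ → E}

theorem norm_setIntegral_le_of_ordConnected (hab : a ≤ b)
    (hK : ∀ u ∈ Icc a b, ∀ v ∈ Icc a b, u ≤ v → ‖∫ t in u..v, f t‖ ≤ K) {X : Set ℝ}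
    (hX : X.OrdConnected) (hXab : X ⊆ Icc a b) : ‖∫ t in X, f t‖ ≤ K := by
  rcases X.eq_empty_or_nonempty with rfl | hne
  · simpa using hK a (left_mem_Icc.2 hab) a (left_mem_Icc.2 hab) le_rfl
  have hb : BddBelow X := bddBelow_Icc.mono hXab
  have ha : BddAbove X := bddAbove_Icc.mono hXab
  have hle : sInf X ≤ sSup X := csInf_le_csSup hne hb ha
  have hinf : a ≤ sInf X := le_csInf hne fun x hx => (hXab hx).1
  have hsup : sSup X ≤ b := csSup_le hne fun x hx => (hXab hx).2
  rw [setIntegral_congr_set (hX.ae_eq_Ioc_csInf_csSup hb ha),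
    ← intervalIntegral.integral_of_le hle]
  exact hK _ ⟨hinf, hle.trans hsup⟩ _ ⟨hinf.trans hle, hsup⟩ hle

theorem norm_integral_smul_le_of_monotoneOn_or_antitoneOn [CompleteSpace E] (hab : a ≤ b)
    {G : ℝ → ℝ} {M : ℝ} (hf : IntegrableOn f (Icc a b)) (hG0 : ∀ t ∈ Icc a b, 0 ≤ G t)
    (hGM : ∀ t ∈ Icc a b, G t ≤ M) (hG : MonotoneOn G (Icc a b) ∨ AntitoneOn G (Icc a b))
    (hK : ∀ u ∈ Icc a b, ∀ v ∈ Icc a b, u ≤ v → ‖∫ t in u..v, f t‖ ≤ K) :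
    ‖∫ t in a..b, G t • f t‖ ≤ K * M := by
  -- extended by its boundary values, `G` becomes globally monotone, hence measurable
  set G' : ℝ → ℝ := fun t => G (projIcc a b hab t)
  have hG' : Monotone G' ∨ Antitone G' := hG.imp
    (fun h x y hxy => h (projIcc a b hab x).2 (projIcc a b hab y).2 (monotone_projIcc hab hxy))
    (fun h x y hxy => h (projIcc a b hab x).2 (projIcc a b hab y).2 (monotone_projIcc hab hxy))
  have hG'meas : Measurable G' := hG'.elim Monotone.measurable Antitone.measurable
  have hlevel (s : ℝ) : ({t | s < G' t} ∩ Ioc a b).OrdConnected := by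
    refine OrdConnected.inter ?_ ordConnected_Ioc
    rcases hG' with h | h
    · exact (isUpperSet_setOfPred.2 fun x y hxy hx => hx.trans_le (h hxy)).ordConnected
    · exact (isLowerSet_setOfPred.2 fun x y hxy hy => hy.trans_le (h hxy)).ordConnected
  have hM : 0 ≤ M := (hG0 a (left_mem_Icc.2 hab)).trans (hGM a (left_mem_Icc.2 hab))
  calc ‖∫ t in a..b, G t • f t‖ = ‖∫ t in Ioc a b, G' t • f t‖ := by
        rw [intervalIntegral.integral_of_le hab]
        congr 1
        refine setIntegral_congr_fun measurableSet_Ioc fun t ht => ?_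
        simp only [G', projIcc_of_mem hab (Ioc_subset_Icc_self ht)]
    _ = ‖∫ s in Ioc (0 : ℝ) M, ∫ t in {t | s < G' t}, f t ∂(volume.restrict (Ioc a b))‖ := by
        rw [integral_smul_eq_integral_setIntegral_lt hG'meas
          (fun t => hG0 _ (projIcc a b hab t).2) (fun t => hGM _ (projIcc a b hab t).2)
          (hf.mono_set Ioc_subset_Icc_self)]
    _ ≤ K * volume.real (Ioc (0 : ℝ) M) := by
        refine norm_setIntegral_le_of_norm_le_const measure_Ioc_lt_top fun s _ => ?_
        rw [Measure.restrict_restrict (measurableSet_lt measurable_const hG'meas)]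
        exact norm_setIntegral_le_of_ordConnected hab hK (hlevel s)
          (inter_subset_right.trans Ioc_subset_Icc_self)
    _ = K * M := by rw [Real.volume_real_Ioc_of_le hM, sub_zero]

end LayerCake

section Oscillatory

variable {f f' f'' : ℝ → ℝ} {c d m r : ℝ}

theorem hasDerivWithinAt_cexp_mul_I_div {s : Set ℝ} {x : ℝ}
    (hf : HasDerivWithinAt f (f' x) s x) (hf' : HasDerivWithinAt f' (f'' x) s x)
    (h0 : f' x ≠ 0) :
    HasDerivWithinAt (fun t => exp (f t * I) / (f' t * I))
      (exp (f x * I) + exp (f x * I) * f'' x * I / f' x ^ 2) s x := by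
  have h0' : (f' x : ℂ) ≠ 0 := ofReal_ne_zero.2 h0
  have hden : (f' x : ℂ) * I ≠ 0 := mul_ne_zero h0' I_ne_zero
  refine ((hf.ofReal_comp.mul_const I).cexp.div (hf'.ofReal_comp.mul_const I) hden
    ).congr_deriv ?_
  field_simp
  linear_combination (-(f'' x : ℂ)) * I_sq

theorem integral_div_sq_eq_inv_sub_inv (hcd : c ≤ d)
    (hf' : ∀ t ∈ Icc c d, HasDerivWithinAt f' (f'' t) (Icc c d) t)
    (hf'' : ContinuousOn f'' (Icc c d)) (h0 : ∀ t ∈ Icc c d, f' t ≠ 0) :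
    ∫ t in c..d, f'' t / f' t ^ 2 = (f' c)⁻¹ - (f' d)⁻¹ := by
  have hcont : ContinuousOn f' (Icc c d) := fun t ht => (hf' t ht).continuousWithinAt
  have hderiv (t : ℝ) (ht : t ∈ Ioo c d) :
      HasDerivAt (fun t => -(f' t)⁻¹) (f'' t / f' t ^ 2) t := by
    refine (((hf' t (Ioo_subset_Icc_self ht)).hasDerivAt (Icc_mem_nhds ht.1 ht.2)).inv
      (h0 t (Ioo_subset_Icc_self ht))).neg.congr_deriv ?_
    ring
  have hint : IntervalIntegrable (fun t => f'' t / f' t ^ 2) volume c d :=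
    (hf''.div (hcont.pow 2) fun t ht => pow_ne_zero 2 (h0 t ht)).intervalIntegrable_of_Icc hcd
  rw [intervalIntegral.integral_eq_sub_of_hasDerivAt_of_le hcd (hcont.inv₀ h0).neg hderiv hint]
  exact neg_sub_neg _ _

theorem integral_cexp_mul_I_eq_sub_integral (hcd : c ≤ d)
    (hf : ∀ t ∈ Icc c d, HasDerivWithinAt f (f' t) (Icc c d) t)
    (hf' : ∀ t ∈ Icc c d, HasDerivWithinAt f' (f'' t) (Icc c d) t)
    (hf'' : ContinuousOn f'' (Icc c d)) (h0 : ∀ t ∈ Icc c d, f' t ≠ 0) :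
    ∫ t in c..d, exp (f t * I) = exp (f d * I) / (f' d * I) - exp (f c * I) / (f' c * I)
      - ∫ t in c..d, exp (f t * I) * f'' t * I / f' t ^ 2 := by
  set g : ℝ → ℂ := fun t => exp (f t * I) * f'' t * I / f' t ^ 2
  have hf_cont : ContinuousOn f (Icc c d) := fun t ht => (hf t ht).continuousWithinAt
  have hf'_cont : ContinuousOn f' (Icc c d) := fun t ht => (hf' t ht).continuousWithinAt
  have hE_cont : ContinuousOn (fun t => exp (f t * I)) (Icc c d) := by fun_prop
  have hg_cont : ContinuousOn g (Icc c d) :=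
    ((hE_cont.mul (continuous_ofReal.comp_continuousOn hf'')).mul continuousOn_const).div
      ((continuous_ofReal.comp_continuousOn hf'_cont).pow 2)
      fun t ht => pow_ne_zero 2 (ofReal_ne_zero.2 (h0 t ht))
  have hE_int := hE_cont.intervalIntegrable_of_Icc (μ := volume) hcd
  have hg_int := hg_cont.intervalIntegrable_of_Icc (μ := volume) hcd
  have hΦ (t : ℝ) (ht : t ∈ Icc c d) :=
    hasDerivWithinAt_cexp_mul_I_div (hf t ht) (hf' t ht) (h0 t ht)
  rw [eq_sub_iff_add_eq, ← intervalIntegral.integral_add hE_int hg_int]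
  exact intervalIntegral.integral_eq_sub_of_hasDerivAt_of_le hcd
    (fun t ht => (hΦ t ht).continuousWithinAt)
    (fun t ht => (hΦ t (Ioo_subset_Icc_self ht)).hasDerivAt (Icc_mem_nhds ht.1 ht.2))
    (hE_int.add hg_int)

theorem mul_sub_le_sub_of_hasDerivWithinAt_Icc {g g' : ℝ → ℝ}
    (hg : ∀ t ∈ Icc c d, HasDerivWithinAt g (g' t) (Icc c d) t) (hg' : ∀ t ∈ Ioo c d, r ≤ g' t) :
    ∀ u ∈ Icc c d, ∀ v ∈ Icc c d, u ≤ v → r * (v - u) ≤ g v - g u := by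
  have hg_at (t : ℝ) (ht : t ∈ Ioo c d) : HasDerivAt g (g' t) t :=
    (hg t (Ioo_subset_Icc_self ht)).hasDerivAt (Icc_mem_nhds ht.1 ht.2)
  refine (convex_Icc c d).mul_sub_le_image_sub_of_le_deriv
    (fun t ht => (hg t ht).continuousWithinAt) ?_ ?_ <;> rw [interior_Icc]
  · exact fun t ht => (hg_at t ht).differentiableAt.differentiableWithinAt
  · exact fun t ht => (hg_at t ht).deriv ▸ hg' t ht

theorem norm_integral_cexp_mul_I_le_of_le_abs_deriv (hcd : c ≤ d) (hm : 0 < m)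
    (hf : ∀ t ∈ Icc c d, HasDerivWithinAt f (f' t) (Icc c d) t)
    (hf' : ∀ t ∈ Icc c d, HasDerivWithinAt f' (f'' t) (Icc c d) t)
    (hf'' : ContinuousOn f'' (Icc c d)) (hf''0 : ∀ t ∈ Icc c d, 0 ≤ f'' t)
    (hmf' : f' d ≤ -m ∨ m ≤ f' c) :
    ‖∫ t in c..d, exp (f t * I)‖ ≤ 3 / m := by
  have hmono : MonotoneOn f' (Icc c d) := fun u hu v hv huv => by
    have := mul_sub_le_sub_of_hasDerivWithinAt_Icc hf'
      (fun t ht => hf''0 t (Ioo_subset_Icc_self ht)) u hu v hv huv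
    linarith
  have hc := left_mem_Icc.2 hcd
  have hd := right_mem_Icc.2 hcd
  have hm_abs (t : ℝ) (ht : t ∈ Icc c d) : m ≤ |f' t| := by
    rcases hmf' with h | h
    · exact (le_neg.1 ((hmono ht hd ht.2).trans h)).trans (neg_le_abs _)
    · exact (h.trans (hmono hc ht ht.1)).trans (le_abs_self _)
  have h0 (t : ℝ) (ht : t ∈ Icc c d) : f' t ≠ 0 := abs_pos.1 (hm.trans_le (hm_abs t ht))
  have hboundary (t : ℝ) (ht : t ∈ Icc c d) : ‖exp (f t * I) / (f' t * I)‖ ≤ m⁻¹ := by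
    simp only [norm_div, norm_mul, norm_exp_ofReal_mul_I, norm_I, norm_real, Real.norm_eq_abs,
      mul_one, one_div]
    exact inv_anti₀ hm (hm_abs t ht)
  have hremainder : ‖∫ t in c..d, exp (f t * I) * f'' t * I / f' t ^ 2‖ ≤ m⁻¹ := calc
    _ ≤ ∫ t in c..d, ‖exp (f t * I) * f'' t * I / f' t ^ 2‖ :=
      intervalIntegral.norm_integral_le_integral_norm hcd
    _ = ∫ t in c..d, f'' t / f' t ^ 2 := by
      refine intervalIntegral.integral_congr fun t ht => ?_
      rw [uIcc_of_le hcd] at ht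
      simp only [norm_div, norm_mul, norm_exp_ofReal_mul_I, norm_I, norm_pow, norm_real,
        Real.norm_eq_abs, one_mul, mul_one, abs_of_nonneg (hf''0 t ht), sq_abs]
    _ = (f' c)⁻¹ - (f' d)⁻¹ := integral_div_sq_eq_inv_sub_inv hcd hf' hf'' h0
    _ ≤ m⁻¹ := by
      have hcd' := hmono hc hd hcd
      rcases hmf' with h | h
      · have := inv_anti₀ hm (le_neg.1 h)
        rw [inv_neg] at this
        linarith [inv_lt_zero.2 (hcd'.trans_lt (h.trans_lt (neg_neg_of_pos hm)))]
      · linarith [inv_anti₀ hm h, inv_pos.2 (hm.trans_le (h.trans hcd'))]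
  rw [integral_cexp_mul_I_eq_sub_integral hcd hf hf' hf'' h0]
  calc _ ≤ _ + _ := norm_sub_le _ _
    _ ≤ m⁻¹ + m⁻¹ + m⁻¹ := by
        gcongr
        refine (norm_sub_le _ _).trans (add_le_add ?_ ?_)
        exacts [hboundary d hd, hboundary c hc]
    _ = 3 / m := by ring

theorem ContinuousOn.exists_mem_Icc_eq_left_or_le_and_eq_right_or_ge {g : ℝ → ℝ}
    (hcd : c ≤ d) (hg : ContinuousOn g (Icc c d)) (y : ℝ) :
    ∃ x ∈ Icc c d, (c = x ∨ g x ≤ y) ∧ (x = d ∨ y ≤ g x) := by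
  by_cases hc : y ≤ g c
  · exact ⟨c, left_mem_Icc.2 hcd, .inl rfl, .inr hc⟩
  by_cases hd : g d ≤ y
  · exact ⟨d, right_mem_Icc.2 hcd, .inr hd, .inl rfl⟩
  obtain ⟨x, hx, hgx⟩ := intermediate_value_Icc hcd hg ⟨(not_le.1 hc).le, (not_le.1 hd).le⟩
  exact ⟨x, hx, .inr hgx.le, .inr hgx.ge⟩

theorem ContinuousOn.exists_Icc_split_at_levels {g : ℝ → ℝ} (hcd : c ≤ d)
    (hg : ContinuousOn g (Icc c d)) (y₁ y₂ : ℝ) :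
    ∃ c₀ d₀, c ≤ c₀ ∧ c₀ ≤ d₀ ∧ d₀ ≤ d ∧ (c = c₀ ∨ g c₀ ≤ y₁) ∧
      (c₀ = d₀ ∨ y₁ ≤ g c₀ ∧ g d₀ ≤ y₂) ∧ (d₀ = d ∨ y₂ ≤ g d₀) := by
  obtain ⟨c₀, hc₀, hc₀l, hc₀r⟩ := hg.exists_mem_Icc_eq_left_or_le_and_eq_right_or_ge hcd y₁
  obtain ⟨d₀, hd₀, hd₀l, hd₀r⟩ := (hg.mono (Icc_subset_Icc_left hc₀.1)
    ).exists_mem_Icc_eq_left_or_le_and_eq_right_or_ge hc₀.2 y₂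
  refine ⟨c₀, d₀, hc₀.1, hd₀.1, hd₀.2, hc₀l, ?_, hd₀r⟩
  rcases hd₀l with h | h
  · exact .inl h
  rcases hc₀r with h' | h'
  · exact .inl (le_antisymm hd₀.1 (h' ▸ hd₀.2))
  · exact .inr ⟨h', h⟩

theorem norm_integral_cexp_mul_I_le_of_le_deriv2 (hcd : c ≤ d) (hr : 0 < r)
    (hf : ∀ t ∈ Icc c d, HasDerivWithinAt f (f' t) (Icc c d) t)
    (hf' : ∀ t ∈ Icc c d, HasDerivWithinAt f' (f'' t) (Icc c d) t)
    (hf'' : ContinuousOn f'' (Icc c d)) (hrf'' : ∀ t ∈ Icc c d, r ≤ f'' t) :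
    ‖∫ t in c..d, exp (f t * I)‖ ≤ 8 / √r := by
  set m := √r
  have hm : 0 < m := Real.sqrt_pos.2 hr
  have hmr : m / r = m⁻¹ := by
    rw [← Real.sq_sqrt hr.le, sq, div_mul_cancel_right₀ hm.ne']
  have hf'_cont : ContinuousOn f' (Icc c d) := fun t ht => (hf' t ht).continuousWithinAt
  have hslope :=
    mul_sub_le_sub_of_hasDerivWithinAt_Icc hf' fun t ht => hrf'' t (Ioo_subset_Icc_self ht)
  have hint : ∀ u ∈ Icc c d, ∀ v ∈ Icc c d,
      IntervalIntegrable (fun t => exp (f t * I)) volume u v := fun u hu v hv => by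
    refine ContinuousOn.intervalIntegrable (ContinuousOn.mono ?_ (uIcc_subset_Icc hu hv))
    have : ContinuousOn f (Icc c d) := fun t ht => (hf t ht).continuousWithinAt
    fun_prop
  have hfar : ∀ u ∈ Icc c d, ∀ v ∈ Icc c d, u ≤ v → (u = v ∨ f' v ≤ -m ∨ m ≤ f' u) →
      ‖∫ t in u..v, exp (f t * I)‖ ≤ 3 / m := by
    rintro u hu v hv huv (rfl | hsign)
    · rw [intervalIntegral.integral_same, norm_zero]
      positivity
    have hsub : Icc u v ⊆ Icc c d := Icc_subset_Icc hu.1 hv.2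
    exact norm_integral_cexp_mul_I_le_of_le_abs_deriv huv hm
      (fun t ht => (hf t (hsub ht)).mono hsub) (fun t ht => (hf' t (hsub ht)).mono hsub)
      (hf''.mono hsub) (fun t ht => hr.le.trans (hrf'' t (hsub ht))) hsign
  have hnear : ∀ u ∈ Icc c d, ∀ v ∈ Icc c d, u ≤ v → (u = v ∨ -m ≤ f' u ∧ f' v ≤ m) →
      ‖∫ t in u..v, exp (f t * I)‖ ≤ 2 / m := by
    rintro u hu v hv huv (rfl | ⟨hu', hv'⟩)
    · rw [intervalIntegral.integral_same, norm_zero]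
      positivity
    calc ‖∫ t in u..v, exp (f t * I)‖ ≤ 1 * |v - u| :=
          intervalIntegral.norm_integral_le_of_norm_le_const fun t _ =>
            (norm_exp_ofReal_mul_I _).le
      _ ≤ 2 * m / r := by
          rw [one_mul, abs_of_nonneg (sub_nonneg.2 huv), le_div_iff₀ hr]
          linarith [hslope u hu v hv huv]
      _ = 2 / m := by rw [mul_div_assoc, hmr, div_eq_mul_inv]
  obtain ⟨c₀, d₀, hcc₀, hc₀d₀, hd₀d, hleft, hmid, hright⟩ :=
    hf'_cont.exists_Icc_split_at_levels hcd (-m) m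
  have hc := left_mem_Icc.2 hcd
  have hd := right_mem_Icc.2 hcd
  have hc₀ : c₀ ∈ Icc c d := ⟨hcc₀, hc₀d₀.trans hd₀d⟩
  have hd₀ : d₀ ∈ Icc c d := ⟨hcc₀.trans hc₀d₀, hd₀d⟩
  have h₁ := hfar c hc c₀ hc₀ hcc₀ (hleft.imp_right .inl)
  have h₂ := hnear c₀ hc₀ d₀ hd₀ hc₀d₀ hmid
  have h₃ := hfar d₀ hd₀ d hd hd₀d (hright.imp_right .inr)
  rw [← intervalIntegral.integral_add_adjacent_intervals (hint c hc c₀ hc₀) (hint c₀ hc₀ d hd),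
    ← intervalIntegral.integral_add_adjacent_intervals (hint c₀ hc₀ d₀ hd₀) (hint d₀ hd₀ d hd)]
  calc _ ≤ ‖∫ t in c..c₀, exp (f t * I)‖ + (‖∫ t in c₀..d₀, exp (f t * I)‖
        + ‖∫ t in d₀..d, exp (f t * I)‖) :=
        (norm_add_le _ _).trans (add_le_add_right (norm_add_le _ _) _)
    _ ≤ 3 / m + (2 / m + 3 / m) := by gcongr
    _ = 8 / m := by ring

theorem norm_integral_cexp_neg_mul_I (φ : ℝ → ℝ) (a b : ℝ) :
    ‖∫ t in a..b, exp (↑(-φ t) * I)‖ = ‖∫ t in a..b, exp (φ t * I)‖ := by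
  rw [← RCLike.norm_conj, ← intervalIntegral.intervalIntegral_conj]
  congr 2 with t
  rw [← exp_conj, map_mul, conj_ofReal, conj_I, ofReal_neg, neg_mul_neg]

open Topology in
theorem norm_integral_cexp_mul_I_le_of_contDiffOn {F : ℝ → ℝ} {a b : ℝ} (hab : a ≤ b)
    (hF : ContDiffOn ℝ 2 F (Icc a b)) (hr : 0 < r)
    (hF'' : ∀ t ∈ Ioo a b, r ≤ deriv (deriv F) t) :
    ‖∫ t in a..b, exp (F t * I)‖ ≤ 8 / √r := by
  rcases hab.eq_or_lt with rfl | hab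
  · rw [intervalIntegral.integral_same, norm_zero]
    positivity
  have hud := uniqueDiffOn_Icc hab
  set f' := derivWithin F (Icc a b)
  set f'' := derivWithin f' (Icc a b)
  have hf' : ContDiffOn ℝ 1 f' (Icc a b) := hF.derivWithin hud (by norm_num)
  have hf''_cont : ContinuousOn f'' (Icc a b) :=
    (hf'.derivWithin hud (m := 0) (by norm_num)).continuousOn
  have hf''_Ioo (t : ℝ) (ht : t ∈ Ioo a b) : f'' t = deriv (deriv F) t := by
    have : f' =ᶠ[𝓝 t] deriv F := Filter.eventually_of_mem (Ioo_mem_nhds ht.1 ht.2)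
      fun w hw => derivWithin_of_mem_nhds (Icc_mem_nhds hw.1 hw.2)
    exact (derivWithin_of_mem_nhds (Icc_mem_nhds ht.1 ht.2)).trans this.deriv_eq
  refine norm_integral_cexp_mul_I_le_of_le_deriv2 hab.le hr
    (fun t ht => ((hF.differentiableOn (by norm_num)) t ht).hasDerivWithinAt)
    (fun t ht => ((hf'.differentiableOn one_ne_zero) t ht).hasDerivWithinAt) hf''_cont
    fun t ht => ?_
  -- `deriv (deriv F)` only sees `F` near interior points; the endpoints follow by continuity
  refine ContinuousWithinAt.closure_le (closure_Ioo hab.ne ▸ ht) continuousWithinAt_const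
    ((hf''_cont t ht).mono Ioo_subset_Icc_self) fun s hs => ?_
  exact (hF'' s hs).trans_eq (hf''_Ioo s hs).symm

theorem norm_integral_cexp_mul_I_le_of_contDiffOn_of_le_abs_deriv2 {F : ℝ → ℝ} {a b : ℝ}
    (hab : a ≤ b) (hF : ContDiffOn ℝ 2 F (Icc a b)) (hr : 0 < r)
    (hF'' : (∀ t ∈ Ioo a b, r ≤ deriv (deriv F) t) ∨ (∀ t ∈ Ioo a b, deriv (deriv F) t ≤ -r)) :
    ‖∫ t in a..b, exp (F t * I)‖ ≤ 8 / √r := by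
  rcases hF'' with h | h
  · exact norm_integral_cexp_mul_I_le_of_contDiffOn hab hF hr h
  · rw [← norm_integral_cexp_neg_mul_I]
    refine norm_integral_cexp_mul_I_le_of_contDiffOn hab hF.neg hr fun t ht => ?_
    rw [deriv.fun_neg', deriv.fun_neg]
    linarith [h t ht]

end Oscillatory

/-- Second-derivative test (van der Corput's lemma with a monotonic positive weight). -/
theorem stmt_10 :
    ∃ C > (0:ℝ), ∀ (a b : ℝ), a < b → ∀ (G F : ℝ → ℝ),
      (∀ t ∈ Icc a b, 0 < G t) →
      (MonotoneOn G (Icc a b) ∨ AntitoneOn G (Icc a b)) →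
      ContDiffOn ℝ 2 F (Icc a b) →
      ∀ r > (0:ℝ),
        ((∀ t ∈ Icc a b, r ≤ deriv (deriv F) t) ∨
          (∀ t ∈ Icc a b, deriv (deriv F) t ≤ -r)) →
        ‖∫ t in a..b, (G t : ℂ) * Complex.exp (F t * I)‖ ≤
          C * sSup (G '' Icc a b) / Real.sqrt r := by
  refine ⟨8, by norm_num, fun a b hab G F hG hGmono hF r hr hF'' => ?_⟩
  have hbdd : BddAbove (G '' Icc a b) :=
    hGmono.elim (fun h => bddAbove_Icc.mono h.image_Icc_subset)
      (fun h => bddAbove_Icc.mono h.image_Icc_subset)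
  have hint : IntegrableOn (fun t => exp (F t * I)) (Icc a b) := by
    have := hF.continuousOn
    exact ContinuousOn.integrableOn_Icc (by fun_prop)
  have hsub {u v : ℝ} (hu : u ∈ Icc a b) (hv : v ∈ Icc a b) : Ioo u v ⊆ Icc a b :=
    Ioo_subset_Icc_self.trans (Icc_subset_Icc hu.1 hv.2)
  calc ‖∫ t in a..b, (G t : ℂ) * exp (F t * I)‖ = ‖∫ t in a..b, G t • exp (F t * I)‖ := by
        simp_rw [Complex.real_smul]
    _ ≤ 8 / √r * sSup (G '' Icc a b) :=
        norm_integral_smul_le_of_monotoneOn_or_antitoneOn hab.le hint (fun t ht => (hG t ht).le)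
          (fun t ht => le_csSup hbdd (mem_image_of_mem G ht)) hGmono fun u hu v hv huv =>
          norm_integral_cexp_mul_I_le_of_contDiffOn_of_le_abs_deriv2 huv
            (hF.mono (Icc_subset_Icc hu.1 hv.2)) hr
            (hF''.imp (fun h t ht => h t (hsub hu hv ht)) fun h t ht => h t (hsub hu hv ht))
    _ = 8 * sSup (G '' Icc a b) / √r := div_mul_eq_mul_div _ _ _
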